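/- Let E be a finite set and R an equivalence relation on 2^E. Then R is the cospanning relation of an antimatroid on E (i.e., there exists an antimatroid (E, F) with rank closure operator σ such that (X, Y) ∈ R iff σ(X) = σ(Y)) if and only if R satisfies, for all X, Y, Z ⊆ E and distinct x, y ∉ X: (R1) (X, Y) ∈ R implies (X, X ∪ Y) ∈ R; (R2) X ⊆ Y ⊆ Z and (X, Z) ∈ R imply (X, Y) ∈ R; (R3) (X, Y) ∈ R implies (X, X ∩ Y) ∈ R; and (R4) if (X ∪ {y}, X ∪ {x, y}) ∈ R but (X ∪ {x}, X ∪ {x, y}) ∉ R, then there exists z ∈ X ∪ {x} with (X ∪ {x} \ {z}, X ∪ {x}) ∈ R. -/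

import Mathlib

/-- A greedoid on `E`: `∅` is feasible and larger feasible sets augment smaller ones. -/
def IsGreedoid {E : Type*} (F : Set (Set E)) : Prop :=
  ∅ ∈ F ∧ ∀ X ∈ F, ∀ Y ∈ F, Y.ncard < X.ncard → ∃ x ∈ X \ Y, insert x Y ∈ F

/-- The rank function of a set system: `r X = max {|A| : A ⊆ X, A ∈ F}`. -/
noncomputable def greedoidRank {E : Type*} (F : Set (Set E)) (X : Set E) : ℕ :=
  sSup {n | ∃ A ∈ F, A ⊆ X ∧ A.ncard = n}

/-- The rank closure operator `σ X = {x : r (X ∪ {x}) = r X}`. -/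
noncomputable def rankClosure {E : Type*} (F : Set (Set E)) (X : Set E) : Set E :=
  {x | greedoidRank F (insert x X) = greedoidRank F X}

/-!
In an antimatroid every set `X` contains a largest feasible subset, its kernel, and the rank
closure `σ X` consists of the kernel together with the points that cannot be added to it
feasibly. Hence `σ X = σ Y` exactly when `X` and `Y` have the same kernel, and (R1)–(R4) are
elementary properties of kernels.

Conversely, by (R3) every class of `R` is closed under intersection and so has a least member
`μ X = classMin R X`; the candidate antimatroid is the family of fixed points of `μ`. By (R4),
extending a fixed point `S` by one point either stays in the class of `S` or gives another fixed
point. With (R1) this shows that every fixed point inside `X` lies below `μ X`, so `μ X` is the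
kernel of `X`, and it also gives union-closure and augmentation.
-/

section Kernel

variable {E : Type*} {F : Set (Set E)} {X Y : Set E} {x : E}

def feasibleKernel (F : Set (Set E)) (X : Set E) : Set E :=
  ⋃₀ {A | A ∈ F ∧ A ⊆ X}

theorem feasibleKernel_subset (F : Set (Set E)) (X : Set E) : feasibleKernel F X ⊆ X :=
  Set.sUnion_subset fun _ hA => hA.2

theorem subset_feasibleKernel {A : Set E} (hA : A ∈ F) (hAX : A ⊆ X) : A ⊆ feasibleKernel F X :=
  Set.subset_sUnion_of_mem ⟨hA, hAX⟩

theorem feasibleKernel_mono (F : Set (Set E)) (hXY : X ⊆ Y) :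
    feasibleKernel F X ⊆ feasibleKernel F Y :=
  Set.sUnion_subset_sUnion fun _ hA => ⟨hA.1, hA.2.trans hXY⟩

theorem feasibleKernel_inter_eq (h : feasibleKernel F X = feasibleKernel F Y) :
    feasibleKernel F (X ∩ Y) = feasibleKernel F X := by
  refine (feasibleKernel_mono F Set.inter_subset_left).antisymm
    (Set.sUnion_subset fun A hA => subset_feasibleKernel hA.1 (Set.subset_inter hA.2 ?_))
  have hAY : A ⊆ feasibleKernel F Y := h ▸ Set.subset_sUnion_of_mem hA
  exact hAY.trans (feasibleKernel_subset F Y)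

theorem feasibleKernel_diff_singleton (hx : x ∉ feasibleKernel F X) :
    feasibleKernel F (X \ {x}) = feasibleKernel F X := by
  refine (feasibleKernel_mono F Set.sdiff_subset).antisymm
    (Set.sUnion_subset fun A hA => subset_feasibleKernel hA.1 fun a ha => ⟨hA.2 ha, ?_⟩)
  rintro rfl
  exact hx (Set.subset_sUnion_of_mem hA ha)

theorem notMem_feasibleKernel_of_feasibleKernel_insert_eq (hxX : x ∉ X)
    (h : feasibleKernel F (insert x X) = feasibleKernel F X) (hY : Y ⊆ insert x X) :
    x ∉ feasibleKernel F Y := fun hx =>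
  hxX (feasibleKernel_subset F X (h ▸ feasibleKernel_mono F hY hx))

theorem subset_rankClosure (F : Set (Set E)) (X : Set E) : X ⊆ rankClosure F X := fun x hx =>
  show greedoidRank F (insert x X) = greedoidRank F X by rw [Set.insert_eq_self.mpr hx]

variable [Finite E]

theorem feasibleKernel_mem (h0 : ∅ ∈ F) (hU : SupClosed F) (X : Set E) :
    feasibleKernel F X ∈ F :=
  hU.sSup_mem (Set.toFinite _) h0 fun _ hA => hA.1

theorem greedoidRank_eq_ncard_feasibleKernel (h0 : ∅ ∈ F) (hU : SupClosed F) (X : Set E) :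
    greedoidRank F X = (feasibleKernel F X).ncard := by
  have hbdd : ∀ n ∈ {n | ∃ A ∈ F, A ⊆ X ∧ A.ncard = n}, n ≤ (feasibleKernel F X).ncard := by
    rintro n ⟨A, hA, hAX, rfl⟩
    exact Set.ncard_le_ncard (subset_feasibleKernel hA hAX)
  exact le_antisymm (csSup_le ⟨0, ∅, h0, Set.empty_subset X, Set.ncard_empty E⟩ hbdd)
    (le_csSup ⟨_, hbdd⟩ ⟨_, feasibleKernel_mem h0 hU X, feasibleKernel_subset F X, rfl⟩)

theorem mem_rankClosure_iff (h0 : ∅ ∈ F) (hU : SupClosed F) :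
    x ∈ rankClosure F X ↔ feasibleKernel F (insert x X) = feasibleKernel F X := by
  change greedoidRank F (insert x X) = greedoidRank F X ↔ _
  rw [greedoidRank_eq_ncard_feasibleKernel h0 hU, greedoidRank_eq_ncard_feasibleKernel h0 hU]
  refine ⟨fun h => ?_, fun h => by rw [h]⟩
  exact (Set.eq_of_subset_of_ncard_le (feasibleKernel_mono F (Set.subset_insert x X)) h.le).symm

theorem exists_insert_feasibleKernel_mem (hG : IsGreedoid F) (hU : SupClosed F) (hXY : X ⊆ Y)
    (hne : feasibleKernel F X ≠ feasibleKernel F Y) :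
    ∃ z ∈ Y \ X, insert z (feasibleKernel F X) ∈ F := by
  obtain ⟨z, ⟨hzY, hzX⟩, hins⟩ := hG.2 _ (feasibleKernel_mem hG.1 hU Y) _
    (feasibleKernel_mem hG.1 hU X)
    (Set.ncard_lt_ncard ((feasibleKernel_mono F hXY).ssubset_of_ne hne))
  refine ⟨z, ⟨feasibleKernel_subset F Y hzY, fun hz => hzX ?_⟩, hins⟩
  exact subset_feasibleKernel hins (Set.insert_subset hz (feasibleKernel_subset F X))
    (Set.mem_insert z _)

theorem feasibleKernel_union_eq (hG : IsGreedoid F) (hU : SupClosed F)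
    (h : feasibleKernel F X = feasibleKernel F Y) :
    feasibleKernel F (X ∪ Y) = feasibleKernel F X := by
  by_contra hne
  obtain ⟨z, ⟨hzXY, hzX⟩, hins⟩ :=
    exists_insert_feasibleKernel_mem hG hU Set.subset_union_left (Ne.symm hne)
  have hzY : z ∈ Y := hzXY.resolve_left hzX
  have hsub : insert z (feasibleKernel F X) ⊆ Y :=
    Set.insert_subset hzY (h ▸ feasibleKernel_subset F Y)
  exact hzX (feasibleKernel_subset F X (h ▸ subset_feasibleKernel hins hsub (Set.mem_insert z _)))

theorem mem_rankClosure_iff_feasibleKernel (hG : IsGreedoid F) (hU : SupClosed F) :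
    x ∈ rankClosure F X ↔ x ∈ feasibleKernel F X ∨ insert x (feasibleKernel F X) ∉ F := by
  rw [mem_rankClosure_iff hG.1 hU, or_iff_not_and_not, not_not]
  constructor
  · rintro h ⟨hx, hins⟩
    exact hx (h ▸ subset_feasibleKernel hins
      (Set.insert_subset_insert (feasibleKernel_subset F X)) (Set.mem_insert x _))
  · intro h
    by_contra hne
    obtain ⟨z, ⟨hz, hzX⟩, hins⟩ :=
      exists_insert_feasibleKernel_mem hG hU (Set.subset_insert x X) (Ne.symm hne)
    obtain rfl : z = x := (Set.mem_insert_iff.mp hz).resolve_right hzX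
    exact h ⟨fun hz' => hzX (feasibleKernel_subset F X hz'), hins⟩

theorem feasibleKernel_rankClosure (hG : IsGreedoid F) (hU : SupClosed F) (X : Set E) :
    feasibleKernel F (rankClosure F X) = feasibleKernel F X := by
  by_contra hne
  obtain ⟨z, ⟨hz, hzX⟩, hins⟩ :=
    exists_insert_feasibleKernel_mem hG hU (subset_rankClosure F X) (Ne.symm hne)
  rcases (mem_rankClosure_iff_feasibleKernel hG hU).mp hz with hzK | hnotin
  · exact hzX (feasibleKernel_subset F X hzK)
  · exact hnotin hins

theorem rankClosure_eq_iff (hG : IsGreedoid F) (hU : SupClosed F) :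
    rankClosure F X = rankClosure F Y ↔ feasibleKernel F X = feasibleKernel F Y := by
  refine ⟨fun h => ?_, fun h => ?_⟩
  · rw [← feasibleKernel_rankClosure hG hU X, h, feasibleKernel_rankClosure hG hU Y]
  · ext x
    simp only [mem_rankClosure_iff_feasibleKernel hG hU, h]

end Kernel

section ClassMin

variable {E : Type*} {R : Set E → Set E → Prop} {S X Y : Set E}

def classMin (R : Set E → Set E → Prop) (X : Set E) : Set E :=
  ⋂₀ {Y | R X Y}

theorem classMin_subset_of_rel (h : R X Y) : classMin R X ⊆ Y :=
  Set.sInter_subset_of_mem h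

theorem classMin_subset (hR : Equivalence R) (X : Set E) : classMin R X ⊆ X :=
  classMin_subset_of_rel (hR.refl X)

theorem classMin_eq_of_rel (hR : Equivalence R) (h : R X Y) : classMin R X = classMin R Y := by
  unfold classMin
  congr 1
  ext Z : 1
  exact ⟨hR.trans (hR.symm h), hR.trans h⟩

theorem rel_classMin [Finite E] (hR : Equivalence R) (hR3 : ∀ X Y, R X Y → R X (X ∩ Y))
    (X : Set E) : R X (classMin R X) := by
  have hinf : InfClosed {Y | R X Y} := fun A hA B hB =>
    hR.trans hA (hR3 A B (hR.trans (hR.symm hA) hB))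
  exact hinf.sInf_mem_of_nonempty (Set.toFinite _) ⟨X, hR.refl X⟩ subset_rfl

theorem rel_iff_classMin_eq [Finite E] (hR : Equivalence R) (hR3 : ∀ X Y, R X Y → R X (X ∩ Y)) :
    R X Y ↔ classMin R X = classMin R Y :=
  ⟨classMin_eq_of_rel hR, fun h =>
    hR.trans (rel_classMin hR hR3 X) (h ▸ hR.symm (rel_classMin hR hR3 Y))⟩

theorem classMin_classMin [Finite E] (hR : Equivalence R) (hR3 : ∀ X Y, R X Y → R X (X ∩ Y))
    (X : Set E) : classMin R (classMin R X) = classMin R X :=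
  (classMin_eq_of_rel hR (rel_classMin hR hR3 X)).symm

theorem not_rel_diff_singleton (hR : Equivalence R) (hS : classMin R S = S) {z : E}
    (hz : z ∈ S) : ¬ R (S \ {z}) S := fun h =>
  (classMin_subset hR _ (classMin_eq_of_rel hR h ▸ hS.symm ▸ hz)).2 rfl

theorem exists_rel_diff_singleton [Finite E] (hR : Equivalence R)
    (hR2 : ∀ X Y Z, X ⊆ Y → Y ⊆ Z → R X Z → R X Y) (hR3 : ∀ X Y, R X Y → R X (X ∩ Y))
    (hS : classMin R S ≠ S) : ∃ x ∈ S, R (S \ {x}) S := by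
  obtain ⟨x, hxS, hx⟩ := Set.exists_of_ssubset ((classMin_subset hR S).ssubset_of_ne hS)
  have hsub : classMin R S ⊆ S \ {x} := fun z hz =>
    ⟨classMin_subset hR S hz, by rintro rfl; exact hx hz⟩
  have h := hR2 _ _ _ hsub Set.sdiff_subset (hR.symm (rel_classMin hR hR3 S))
  exact ⟨x, hxS, hR.trans (hR.symm h) (hR.symm (rel_classMin hR hR3 S))⟩

end ClassMin

section Construction

def CospanningExchange {E : Type*} (R : Set E → Set E → Prop) : Prop :=
  ∀ (X : Set E) (x y : E), x ≠ y → x ∉ X → y ∉ X →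
    R (insert y X) (insert x (insert y X)) → ¬ R (insert x X) (insert x (insert y X)) →
    ∃ z ∈ insert x X, R ((insert x X) \ {z}) (insert x X)

variable {E : Type*} [Finite E] {R : Set E → Set E → Prop} {S X Y : Set E}

theorem rel_of_forall_rel_insert (hR : Equivalence R) (hR1 : ∀ X Y, R X Y → R X (X ∪ Y))
    (hSY : S ⊆ Y) (h : ∀ y ∈ Y \ S, R S (insert y S)) : R S Y := by
  have hsup : SupClosed {T | R S T} := fun A hA B hB =>
    hR.trans hA (hR1 A B (hR.trans (hR.symm hA) hB))
  have hY : sSup (insert S ((insert · S) '' (Y \ S))) = Y := by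
    refine (sSup_le ?_).antisymm fun y hy => ?_
    · rintro T (rfl | ⟨y, hy, rfl⟩)
      exacts [hSY, Set.insert_subset hy.1 hSY]
    · by_cases hyS : y ∈ S
      · exact Set.mem_sUnion.2 ⟨S, Set.mem_insert _ _, hyS⟩
      · exact Set.mem_sUnion.2 ⟨_, Set.mem_insert_of_mem _ ⟨y, ⟨hy, hyS⟩, rfl⟩, Set.mem_insert y S⟩
  exact hY ▸ hsup.sSup_mem_of_nonempty (Set.toFinite _) (Set.insert_nonempty _ _)
    (Set.insert_subset (hR.refl S) (Set.image_subset_iff.2 h))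

theorem rel_insert_or_classMin_insert (hR : Equivalence R)
    (hR2 : ∀ X Y Z, X ⊆ Y → Y ⊆ Z → R X Z → R X Y) (hR3 : ∀ X Y, R X Y → R X (X ∩ Y))
    (hR4 : CospanningExchange R) (hS : classMin R S = S) {y : E} (hy : y ∉ S) :
    R S (insert y S) ∨ classMin R (insert y S) = insert y S := by
  by_contra! ⟨hnR, hnF⟩
  obtain ⟨x, hx, hRx⟩ := exists_rel_diff_singleton hR hR2 hR3 hnF
  rcases Set.mem_insert_iff.mp hx with rfl | hxS
  · rw [Set.insert_sdiff_self_of_notMem hy] at hRx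
    exact hnR hRx
  · have hxy : x ≠ y := by rintro rfl; exact hy hxS
    have hS' : insert x (S \ {x}) = S := Set.insert_sdiff_self_of_mem hxS
    have hxyS : insert x (insert y (S \ {x})) = insert y S := by rw [Set.insert_comm, hS']
    have hdiff : insert y (S \ {x}) = insert y S \ {x} := Set.insert_sdiff_singleton_comm hxy.symm S
    obtain ⟨z, hz, hzR⟩ := hR4 (S \ {x}) x y hxy (fun h => h.2 rfl) (fun h => hy h.1)
      (by rwa [hxyS, hdiff]) (by rwa [hS', hxyS])
    rw [hS'] at hz hzR
    exact not_rel_diff_singleton hR hS hz hzR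

theorem subset_classMin_of_subset (hR : Equivalence R) (hR1 : ∀ X Y, R X Y → R X (X ∪ Y))
    (hR2 : ∀ X Y Z, X ⊆ Y → Y ⊆ Z → R X Z → R X Y) (hR3 : ∀ X Y, R X Y → R X (X ∩ Y))
    (hR4 : CospanningExchange R) (hS : classMin R S = S) (hSX : S ⊆ X) : S ⊆ classMin R X := by
  induction S using WellFoundedGT.induction with
  | _ S ih =>
    by_cases hext : ∃ y ∈ X \ S, classMin R (insert y S) = insert y S
    · obtain ⟨y, ⟨hyX, hyS⟩, hyF⟩ := hext
      exact (Set.subset_insert y S).trans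
        (ih _ (Set.ssubset_insert hyS) hyF (Set.insert_subset hyX hSX))
    · push Not at hext
      have hRSX : R S X := rel_of_forall_rel_insert hR hR1 hSX fun y hy =>
        (rel_insert_or_classMin_insert hR hR2 hR3 hR4 hS hy.2).resolve_right (hext y hy)
      rw [← classMin_eq_of_rel hR hRSX, hS]

theorem supClosed_fixedPoints_classMin (hR : Equivalence R)
    (hR1 : ∀ X Y, R X Y → R X (X ∪ Y)) (hR2 : ∀ X Y Z, X ⊆ Y → Y ⊆ Z → R X Z → R X Y)
    (hR3 : ∀ X Y, R X Y → R X (X ∩ Y)) (hR4 : CospanningExchange R) :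
    SupClosed (Function.fixedPoints (classMin R)) := fun _ hA _ hB =>
  (classMin_subset hR _).antisymm (Set.union_subset
    (subset_classMin_of_subset hR hR1 hR2 hR3 hR4 hA Set.subset_union_left)
    (subset_classMin_of_subset hR hR1 hR2 hR3 hR4 hB Set.subset_union_right))

theorem feasibleKernel_fixedPoints_classMin (hR : Equivalence R)
    (hR1 : ∀ X Y, R X Y → R X (X ∪ Y)) (hR2 : ∀ X Y Z, X ⊆ Y → Y ⊆ Z → R X Z → R X Y)
    (hR3 : ∀ X Y, R X Y → R X (X ∩ Y)) (hR4 : CospanningExchange R) (X : Set E) :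
    feasibleKernel (Function.fixedPoints (classMin R)) X = classMin R X :=
  (Set.sUnion_subset fun _ hA => subset_classMin_of_subset hR hR1 hR2 hR3 hR4 hA.1 hA.2).antisymm
    (subset_feasibleKernel (classMin_classMin hR hR3 X) (classMin_subset hR X))

theorem isGreedoid_fixedPoints_classMin (hR : Equivalence R)
    (hR1 : ∀ X Y, R X Y → R X (X ∪ Y)) (hR2 : ∀ X Y Z, X ⊆ Y → Y ⊆ Z → R X Z → R X Y)
    (hR3 : ∀ X Y, R X Y → R X (X ∩ Y)) (hR4 : CospanningExchange R) :
    IsGreedoid (Function.fixedPoints (classMin R)) := by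
  refine ⟨Set.subset_empty_iff.mp (classMin_subset hR ∅), fun A hA B hB hlt => ?_⟩
  by_contra! hstuck
  have hRB : R B (A ∪ B) := rel_of_forall_rel_insert hR hR1 Set.subset_union_right fun z hz =>
    (rel_insert_or_classMin_insert hR hR2 hR3 hR4 hB hz.2).resolve_right
      (hstuck z ⟨hz.1.resolve_right hz.2, hz.2⟩)
  have hAB : A ⊆ B := hB ▸ classMin_eq_of_rel hR hRB ▸
    subset_classMin_of_subset hR hR1 hR2 hR3 hR4 hA Set.subset_union_left
  exact hlt.not_ge (Set.ncard_le_ncard hAB)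

end Construction

theorem stmt17 {E : Type*} [Fintype E] (R : Set E → Set E → Prop) (hR : Equivalence R) :
    (∃ F : Set (Set E), IsGreedoid F ∧ (∀ A ∈ F, ∀ B ∈ F, A ∪ B ∈ F) ∧
        ∀ X Y : Set E, R X Y ↔ rankClosure F X = rankClosure F Y) ↔
      ((∀ X Y : Set E, R X Y → R X (X ∪ Y)) ∧
       (∀ X Y Z : Set E, X ⊆ Y → Y ⊆ Z → R X Z → R X Y) ∧
       (∀ X Y : Set E, R X Y → R X (X ∩ Y)) ∧
       (∀ (X : Set E) (x y : E), x ≠ y → x ∉ X → y ∉ X →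
         R (insert y X) (insert x (insert y X)) →
         ¬ R (insert x X) (insert x (insert y X)) →
         ∃ z ∈ insert x X, R ((insert x X) \ {z}) (insert x X))) := by
  constructor
  · rintro ⟨F, hG, hU, hcospan⟩
    have hsup : SupClosed F := fun A hA B hB => hU A hA B hB
    simp only [hcospan, rankClosure_eq_iff hG hsup]
    refine ⟨fun X Y h => (feasibleKernel_union_eq hG hsup h).symm,
      fun X Y Z hXY hYZ h => (feasibleKernel_mono F hXY).antisymm (h ▸ feasibleKernel_mono F hYZ),
      fun X Y h => (feasibleKernel_inter_eq h).symm,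
      fun X x y hxy hxX _ h _ => ⟨x, Set.mem_insert x X, feasibleKernel_diff_singleton ?_⟩⟩
    exact notMem_feasibleKernel_of_feasibleKernel_insert_eq (by simp [hxy, hxX]) h.symm
      (Set.insert_subset_insert (Set.subset_insert y X))
  · rintro ⟨hR1, hR2, hR3, hR4⟩
    have hG := isGreedoid_fixedPoints_classMin hR hR1 hR2 hR3 hR4
    have hsup := supClosed_fixedPoints_classMin hR hR1 hR2 hR3 hR4
    refine ⟨_, hG, fun A hA B hB => hsup hA hB, fun X Y => ?_⟩
    rw [rankClosure_eq_iff hG hsup, feasibleKernel_fixedPoints_classMin hR hR1 hR2 hR3 hR4,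
      feasibleKernel_fixedPoints_classMin hR hR1 hR2 hR3 hR4]
    exact rel_iff_classMin_eq hR hR3
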